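/- Let n ≥ 2 and let X ∈ GL(n, K̄) satisfy (Ad_{X⁻¹σ(X)} ⊗ Ad_{X⁻¹σ(X)})(r_DJ) = r_DJ for every σ ∈ Gal(K̄/K), where r_DJ is the Drinfeld–Jimbo r-matrix in Mₙ(K̄) ⊗ Mₙ(K̄). Then there exist Q ∈ GL(n, K̄) with all entries in the image of K, and C ∈ GL(n, K̄) with (Ad_C ⊗ Ad_C)(r_DJ) = r_DJ, such that X = Q·C. (Triviality of the Belavin–Drinfeld cohomology H¹_BD(r_DJ) for sl(n).) -/

import Mathlib

open scoped TensorProduct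

noncomputable section

/-- `K = ℂ((ℏ))`, the field of formal Laurent series over `ℂ`. -/
abbrev K : Type := LaurentSeries ℂ

/-- A fixed algebraic closure of `K`. -/
abbrev Kbar : Type := AlgebraicClosure K

/-- Conjugation `a ↦ X a X⁻¹` as a linear endomorphism of `Mₙ(F)`. -/
def conjLin (F : Type*) [Field F] {n : ℕ} (X : Matrix (Fin n) (Fin n) F) :
    Matrix (Fin n) (Fin n) F →ₗ[F] Matrix (Fin n) (Fin n) F :=
  (LinearMap.mulLeft F X).comp (LinearMap.mulRight F X⁻¹)

/-- The operator `Ad_X ⊗ Ad_X : a ⊗ b ↦ (X a X⁻¹) ⊗ (X b X⁻¹)` on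
`Mₙ(F) ⊗_F Mₙ(F)`. -/
def AdT (F : Type*) [Field F] {n : ℕ} (X : Matrix (Fin n) (Fin n) F) :
    (Matrix (Fin n) (Fin n) F ⊗[F] Matrix (Fin n) (Fin n) F) →ₗ[F]
      (Matrix (Fin n) (Fin n) F ⊗[F] Matrix (Fin n) (Fin n) F) :=
  TensorProduct.map (conjLin F X) (conjLin F X)

/-- `Ω₀ = Σᵢ Eᵢᵢ ⊗ Eᵢᵢ − (1/n)·(I ⊗ I)`, the Cartan part of the Casimir
element of `sl(n)`. -/
def Omega0 (F : Type*) [Field F] (n : ℕ) :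
    Matrix (Fin n) (Fin n) F ⊗[F] Matrix (Fin n) (Fin n) F :=
  (∑ i : Fin n, Matrix.single i i (1 : F) ⊗ₜ[F] Matrix.single i i (1 : F))
    - (n : F)⁻¹ • ((1 : Matrix (Fin n) (Fin n) F) ⊗ₜ[F] (1 : Matrix (Fin n) (Fin n) F))

/-- The Drinfeld–Jimbo `r`-matrix `r_DJ = Σ_{i<j} E_ij ⊗ E_ji + (1/2)·Ω₀`. -/
def rDJ (F : Type*) [Field F] (n : ℕ) :
    Matrix (Fin n) (Fin n) F ⊗[F] Matrix (Fin n) (Fin n) F :=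
  (∑ i : Fin n, ∑ j : Fin n,
      if (i : ℕ) < (j : ℕ) then
        Matrix.single i j (1 : F) ⊗ₜ[F] Matrix.single j i (1 : F)
      else 0)
    + (2⁻¹ : F) • Omega0 F n

/-!
A matrix `C` with `(Ad_C ⊗ Ad_C)(r_DJ) = r_DJ` is diagonal: comparing the coefficients of
`(C ⊗ C) r_DJ = r_DJ (C ⊗ C)` shows that `C` is a monomial matrix whose permutation has no
inversions. Hence every cocycle value `X⁻¹ σ(X)` is diagonal, i.e. each `σ` rescales each column
of `X`. Dividing every column by one of its nonzero entries therefore gives a Galois-invariant,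
hence `K`-rational, matrix `Q` with `X = Q · diag(c)`, and invertible diagonal matrices fix `r_DJ`.
-/

open Matrix

section MatrixLemmas

variable {ι R : Type*} [Fintype ι] [DecidableEq ι]

theorem Matrix.mul_single_one_apply [NonAssocSemiring R] (M : Matrix ι ι R) (i j a e : ι) :
    (M * single i j (1 : R)) a e = if e = j then M a i else 0 := by
  simp [Matrix.mul_apply, Matrix.single_apply, ite_and, eq_comm]

theorem Matrix.single_one_mul_apply [NonAssocSemiring R] (M : Matrix ι ι R) (i j a e : ι) :
    (single i j (1 : R) * M) a e = if a = i then M j e else 0 := by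
  simp [Matrix.mul_apply, Matrix.single_apply, ite_and, eq_comm]

theorem Matrix.inv_diagonal_of_ne_zero [Field R] {d : ι → R} (hd : ∀ i, d i ≠ 0) :
    (diagonal d)⁻¹ = diagonal fun i => (d i)⁻¹ :=
  inv_eq_right_inv (by simp [hd])

theorem Matrix.isDiag_of_mul_eq_zero [LinearOrder ι] [CommRing R] [NoZeroDivisors R]
    {C : Matrix ι ι R} (hC : C.det ≠ 0)
    (hrow : ∀ a e f, e ≠ f → C a e * C a f = 0)
    (hcol : ∀ a b e, a ≠ b → C a e * C b e = 0)
    (hinversion : ∀ a b e f, a < b → e < f → C a f * C b e = 0) : C.IsDiag := by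
  have hrow_ne (a : ι) : ∃ e, C a e ≠ 0 := by
    by_contra! ha
    exact hC (det_eq_zero_of_row_eq_zero a ha)
  choose π hπ using hrow_ne
  -- By `hrow`, `π a` is the only nonzero entry of row `a`; no inversions makes `π` increasing.
  have hmono : StrictMono π := by
    intro a b hab
    rcases lt_trichotomy (π a) (π b) with hlt | heq | hgt
    · exact hlt
    · exact absurd (hcol a b (π a) hab.ne) (mul_ne_zero (hπ a) (heq ▸ hπ b))
    · exact absurd (hinversion a b (π b) (π a) hab hgt) (mul_ne_zero (hπ a) (hπ b))
  have hπ_id : π = id := hmono.eq_id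
  intro i j hij
  by_contra hji
  exact mul_ne_zero hji (hπ i) (hrow i j (π i) (by rw [hπ_id]; exact hij.symm))

end MatrixLemmas

section Tensor

variable {F : Type*} [Field F] {n : ℕ}

theorem AdT_apply_eq_mul (C : Matrix (Fin n) (Fin n) F)
    (t : Matrix (Fin n) (Fin n) F ⊗[F] Matrix (Fin n) (Fin n) F) :
    AdT F C t = (C ⊗ₜ[F] C) * t * (C⁻¹ ⊗ₜ[F] C⁻¹) := by
  induction t using TensorProduct.induction_on with
  | zero => simp
  | tmul a b => simp [AdT, conjLin, Algebra.TensorProduct.tmul_mul_tmul, Matrix.mul_assoc]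
  | add x y hx hy => simp [mul_add, add_mul, hx, hy]

theorem commute_of_AdT_eq {C : Matrix (Fin n) (Fin n) F} (hC : IsUnit C)
    {t : Matrix (Fin n) (Fin n) F ⊗[F] Matrix (Fin n) (Fin n) F} (h : AdT F C t = t) :
    Commute (C ⊗ₜ[F] C) t := by
  have hinv : (C⁻¹ ⊗ₜ[F] C⁻¹) * (C ⊗ₜ[F] C) = 1 := by
    rw [Algebra.TensorProduct.tmul_mul_tmul,
      Matrix.nonsing_inv_mul _ ((isUnit_iff_isUnit_det C).mp hC)]
    rfl
  rw [AdT_apply_eq_mul] at h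
  calc (C ⊗ₜ[F] C) * t = (C ⊗ₜ[F] C) * t * ((C⁻¹ ⊗ₜ[F] C⁻¹) * (C ⊗ₜ[F] C)) := by
        rw [hinv, mul_one]
    _ = t * (C ⊗ₜ[F] C) := by rw [← mul_assoc, h]

def tensorEntry (a e b f : Fin n) :
    (Matrix (Fin n) (Fin n) F ⊗[F] Matrix (Fin n) (Fin n) F) →ₗ[F] F :=
  TensorProduct.lift ((LinearMap.mul F F).compl₁₂ (entryLinearMap F F a e) (entryLinearMap F F b f))

@[simp] theorem tensorEntry_tmul (a e b f : Fin n) (x y : Matrix (Fin n) (Fin n) F) :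
    tensorEntry a e b f (x ⊗ₜ[F] y) = x a e * y b f := rfl

theorem tensorEntry_tmul_mul_rDJ (C : Matrix (Fin n) (Fin n) F) (a e b f : Fin n) :
    tensorEntry a e b f ((C ⊗ₜ[F] C) * rDJ F n) =
      (if (f : ℕ) < e then C a f * C b e else 0)
        + 2⁻¹ * ((if e = f then C a e * C b e else 0) - (n : F)⁻¹ * (C a e * C b f)) := by
  simp only [rDJ, Fin.val_fin_lt, Omega0, mul_add, Finset.mul_sum, mul_ite, Algebra.TensorProduct.tmul_mul_tmul,
    mul_zero, mul_smul_comm, mul_sub, mul_one, map_add, map_sum, apply_ite (tensorEntry a e b f), tensorEntry_tmul,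
    mul_single_one_apply, ite_mul, zero_mul, map_zero, map_smul, map_sub, Finset.sum_ite_eq, Finset.mem_univ,
    ↓reduceIte, smul_eq_mul, eq_comm]
  rw [Fintype.sum_eq_single f fun x hx => by simp [Ne.symm hx],
    Fintype.sum_eq_single e fun x hx => by simp [Ne.symm hx]]
  split_ifs <;> simp_all

theorem tensorEntry_rDJ_mul_tmul (C : Matrix (Fin n) (Fin n) F) (a e b f : Fin n) :
    tensorEntry a e b f (rDJ F n * (C ⊗ₜ[F] C)) =
      (if (a : ℕ) < b then C b e * C a f else 0)
        + 2⁻¹ * ((if a = b then C a e * C a f else 0) - (n : F)⁻¹ * (C a e * C b f)) := by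
  simp only [rDJ, Fin.val_fin_lt, Omega0, add_mul, Finset.sum_mul, ite_mul, Algebra.TensorProduct.tmul_mul_tmul,
    zero_mul, smul_mul_assoc, sub_mul, one_mul, map_add, map_sum, apply_ite (tensorEntry a e b f), tensorEntry_tmul,
    single_one_mul_apply, mul_ite, mul_zero, map_zero, map_smul, map_sub, Finset.sum_ite_eq, Finset.mem_univ,
    ↓reduceIte, smul_eq_mul, eq_comm]
  rw [Fintype.sum_eq_single a fun x hx => by simp [Ne.symm hx],
    Fintype.sum_eq_single b fun x hx => by simp [Ne.symm hx]]
  split_ifs <;> simp_all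

theorem conjLin_diagonal_single {d : Fin n → F} (hd : ∀ i, d i ≠ 0) (i j : Fin n) (c : F) :
    conjLin F (diagonal d) (single i j c) = (d i / d j) • single i j c := by
  ext a b
  simp only [conjLin, inv_diagonal_of_ne_zero hd, LinearMap.comp_apply, LinearMap.mulLeft_apply,
    LinearMap.mulRight_apply, mul_diagonal, diagonal_mul, Matrix.smul_apply, single_apply, smul_eq_mul]
  split_ifs with hab
  · rw [hab.1, hab.2]
    ring
  · simp

theorem conjLin_diagonal_one {d : Fin n → F} (hd : ∀ i, d i ≠ 0) :
    conjLin F (diagonal d) 1 = 1 := by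
  simp [conjLin, inv_diagonal_of_ne_zero hd, hd]

theorem AdT_diagonal_single_tmul_single {d : Fin n → F} (hd : ∀ i, d i ≠ 0) (i j : Fin n) :
    AdT F (diagonal d) (single i j (1 : F) ⊗ₜ[F] single j i 1) = single i j 1 ⊗ₜ[F] single j i 1 := by
  rw [AdT, TensorProduct.map_tmul, conjLin_diagonal_single hd, conjLin_diagonal_single hd,
    TensorProduct.smul_tmul_smul, div_mul_div_cancel₀' (hd i), div_self (hd j), one_smul]

theorem AdT_diagonal_rDJ {d : Fin n → F} (hd : ∀ i, d i ≠ 0) :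
    AdT F (diagonal d) (rDJ F n) = rDJ F n := by
  have hone : AdT F (diagonal d) ((1 : Matrix (Fin n) (Fin n) F) ⊗ₜ[F] 1) = 1 ⊗ₜ[F] 1 := by
    rw [AdT, TensorProduct.map_tmul, conjLin_diagonal_one hd]
  simp only [rDJ, Omega0, map_add, map_sum, map_sub, map_smul, apply_ite (AdT F (diagonal d)),
    map_zero, AdT_diagonal_single_tmul_single hd, hone]

theorem rDJ_entry_relation [NeZero (2 : F)] {C : Matrix (Fin n) (Fin n) F}
    (h : Commute (C ⊗ₜ[F] C) (rDJ F n)) (a e b f : Fin n) :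
    2 * (if (f : ℕ) < e then C a f * C b e else 0) + (if e = f then C a e * C b e else 0)
      = 2 * (if (a : ℕ) < b then C b e * C a f else 0) + (if a = b then C a e * C a f else 0) := by
  have hab := congrArg (tensorEntry a e b f) h.eq
  rw [tensorEntry_tmul_mul_rDJ, tensorEntry_rDJ_mul_tmul] at hab
  have h2 : (2 : F) * 2⁻¹ = 1 := mul_inv_cancel₀ two_ne_zero
  linear_combination 2 * hab - ((if e = f then C a e * C b e else 0)
      - (if a = b then C a e * C a f else 0)) * h2

theorem isDiag_of_AdT_rDJ_eq [NeZero (2 : F)] {C : Matrix (Fin n) (Fin n) F} (hC : IsUnit C)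
    (h : AdT F C (rDJ F n) = rDJ F n) : C.IsDiag := by
  have E := rDJ_entry_relation (commute_of_AdT_eq hC h)
  refine C.isDiag_of_mul_eq_zero ((isUnit_iff_isUnit_det C).mp hC).ne_zero
    (fun a e f hef => ?_) (fun a b e hab => ?_) (fun a b e f hab hef => ?_)
  · have hrel := E a e a f
    rw [if_neg (lt_irrefl _), if_neg hef, if_pos rfl] at hrel
    split_ifs at hrel
    · linear_combination hrel
    · linear_combination -hrel
  · have hrel := E a e b e
    rw [if_neg (lt_irrefl _), if_pos rfl, if_neg hab] at hrel
    split_ifs at hrel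
    · linear_combination -hrel
    · linear_combination hrel
  · have hrel := E a e b f
    rw [if_neg (show ¬(f : ℕ) < e from hef.not_gt), if_neg hef.ne, if_pos (show (a : ℕ) < b from hab),
      if_neg hab.ne] at hrel
    have htwice : (2 : F) * (C a f * C b e) = 0 := by linear_combination -hrel
    exact (mul_eq_zero.mp htwice).resolve_left two_ne_zero

end Tensor

section Descent

variable {k L ι : Type*} [Field k] [Field L] [Algebra k L] [Fintype ι] [DecidableEq ι]

theorem Matrix.eq_mul_diagonal_of_isDiag_inv_mul {X Y : Matrix ι ι L} (hX : IsUnit X)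
    (hD : (X⁻¹ * Y).IsDiag) : Y = X * diagonal (X⁻¹ * Y).diag := by
  rw [hD.diagonal_diag, mul_nonsing_inv_cancel_left _ _ ((isUnit_iff_isUnit_det X).mp hX)]

theorem Matrix.exists_eq_mul_diagonal_of_forall_isDiag [IsGalois k L] {X : Matrix ι ι L}
    (hX : IsUnit X) (h : ∀ σ : L ≃ₐ[k] L, (X⁻¹ * X.map σ).IsDiag) :
    ∃ (Q : Matrix ι ι L) (c : ι → L), IsUnit Q ∧ (∀ i j, Q i j ∈ (algebraMap k L).range) ∧
      (∀ j, c j ≠ 0) ∧ X = Q * diagonal c := by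
  have hdet := (isUnit_iff_isUnit_det X).mp hX
  have hcol (j : ι) : ∃ i, X i j ≠ 0 := by
    by_contra! hj
    exact hdet.ne_zero (det_eq_zero_of_column_eq_zero j hj)
  choose r hr using hcol
  have hσ (σ : L ≃ₐ[k] L) (i j : ι) : σ (X i j) = X i j * (X⁻¹ * X.map σ) j j := by
    simpa [mul_diagonal] using congrFun₂ (eq_mul_diagonal_of_isDiag_inv_mul hX (h σ)) i j
  refine ⟨X * diagonal (fun j => (X (r j) j)⁻¹), fun j => X (r j) j,
    hX.mul (isUnit_diagonal.mpr (Pi.isUnit_iff.mpr fun j => (hr j).isUnit.inv)),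
    fun i j => ?_, hr, ?_⟩
  · rw [mul_diagonal]
    refine (InfiniteGalois.mem_range_algebraMap_iff_fixed _).mpr fun σ => ?_
    have hd : (X⁻¹ * X.map σ) j j ≠ 0 := fun h0 =>
      hr j (σ.injective (by rw [hσ, h0, mul_zero, map_zero]))
    rw [map_mul, map_inv₀, hσ, hσ, mul_inv, mul_mul_mul_comm, mul_inv_cancel₀ hd, mul_one]
  · rw [Matrix.mul_assoc, diagonal_mul_diagonal]
    simp [hr]

end Descent

theorem statement4_general (n : ℕ)
    (X : Matrix (Fin n) (Fin n) Kbar) (hX : IsUnit X)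
    (h : ∀ σ : Kbar ≃ₐ[K] Kbar,
      AdT Kbar (X⁻¹ * X.map σ) (rDJ Kbar n) = rDJ Kbar n) :
    ∃ Q C : Matrix (Fin n) (Fin n) Kbar,
      IsUnit Q ∧ (∀ i j, Q i j ∈ (algebraMap K Kbar).range) ∧
      IsUnit C ∧ AdT Kbar C (rDJ Kbar n) = rDJ Kbar n ∧
      X = Q * C := by
  have : CharZero K := charZero_of_injective_algebraMap (algebraMap ℂ K).injective
  have hdiag (σ : Kbar ≃ₐ[K] Kbar) : (X⁻¹ * X.map σ).IsDiag :=
    isDiag_of_AdT_rDJ_eq ((isUnit_nonsing_inv_iff.mpr hX).mul (hX.map σ.mapMatrix)) (h σ)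
  obtain ⟨Q, c, hQ, hQK, hc, rfl⟩ := exists_eq_mul_diagonal_of_forall_isDiag hX hdiag
  exact ⟨Q, diagonal c, hQ, hQK, isUnit_diagonal.mpr (Pi.isUnit_iff.mpr fun j => (hc j).isUnit),
    AdT_diagonal_rDJ hc, rfl⟩

/-- Triviality of the Belavin–Drinfeld cohomology `H¹_BD(r_DJ)` for `sl(n)`:
any Belavin–Drinfeld cocycle `X` for `r_DJ` factors as `X = Q·C` with `Q`
defined over `K` and `C` in the centralizer of `r_DJ`. -/
theorem statement4 (n : ℕ) (hn : 2 ≤ n)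
    (X : Matrix (Fin n) (Fin n) Kbar) (hX : IsUnit X)
    (h : ∀ σ : Kbar ≃ₐ[K] Kbar,
      AdT Kbar (X⁻¹ * X.map σ) (rDJ Kbar n) = rDJ Kbar n) :
    ∃ Q C : Matrix (Fin n) (Fin n) Kbar,
      IsUnit Q ∧ (∀ i j, Q i j ∈ (algebraMap K Kbar).range) ∧
      IsUnit C ∧ AdT Kbar C (rDJ Kbar n) = rDJ Kbar n ∧
      X = Q * C :=
  statement4_general n X hX h
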